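/- arXiv:0707.0088 — 7 statements merged into one kernel-verified Lean document; each statement's English description precedes it below -/
import Mathlib

section
/- Let p : ℕ → ℤ be a perversity (i.e. for all naturals m ≤ n, p m ≤ p n and (m : ℤ) − p m ≤ (n : ℤ) − p n) and let d ≥ 2 be an integer. Then the functions p⁻ and p⁺ defined by p⁻ n = p n − 1 if p d ≤ p n and p⁻ n = p n otherwise, and p⁺ n = p n + 1 if (d : ℤ) − p d ≤ (n : ℤ) − p n and p⁺ n = p n otherwise, are again perversities; moreover p⁻ n ≤ p n ≤ p⁺ n for all n, p⁺ n − p⁻ n ≤ 2 for all n, and p⁻ n = p n − 1 and p⁺ n = p n + 1 for all n ≥ d. -/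
/-- A perversity is a function `p : ℕ → ℤ` that is nondecreasing and whose dual
`n ↦ n - p n` is also nondecreasing. -/
def IsPerversity (p : ℕ → ℤ) : Prop :=
  ∀ m n : ℕ, m ≤ n → p m ≤ p n ∧ (m : ℤ) - p m ≤ (n : ℤ) - p n

/-- Existence half of Proposition 2.8: `p⁻` and `p⁺` are perversities,
`p⁻ ≤ p ≤ p⁺`, `p⁺ - p⁻ ≤ 2`, and `p⁻ = p - 1`, `p⁺ = p + 1` in codimension `≥ d`. -/
theorem perversity_pm_pp (p : ℕ → ℤ) (hp : IsPerversity p) (d : ℕ) (hd : 2 ≤ d)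
    (pm pp : ℕ → ℤ)
    (hpm : ∀ n, pm n = if p d ≤ p n then p n - 1 else p n)
    (hpp : ∀ n, pp n = if (d : ℤ) - p d ≤ (n : ℤ) - p n then p n + 1 else p n) :
    IsPerversity pm ∧ IsPerversity pp ∧
    (∀ n, pm n ≤ p n ∧ p n ≤ pp n) ∧
    (∀ n, pp n - pm n ≤ 2) ∧
    (∀ n, d ≤ n → pm n = p n - 1 ∧ pp n = p n + 1) := by
  refine ⟨?_, ?_, ?_, ?_, ?_⟩
  · intro m n hmn
    obtain ⟨h1, h2⟩ := hp m n hmn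
    rw [hpm m, hpm n]
    by_cases hm : p d ≤ p m <;> by_cases hn : p d ≤ p n <;>
      simp [hm, hn] <;> omega
  · intro m n hmn
    obtain ⟨h1, h2⟩ := hp m n hmn
    rw [hpp m, hpp n]
    by_cases hm : (d : ℤ) - p d ≤ (m : ℤ) - p m <;>
      by_cases hn : (d : ℤ) - p d ≤ (n : ℤ) - p n <;>
      simp [hm, hn] <;> omega
  · intro n
    rw [hpm n, hpp n]
    split <;> split <;> omega
  · intro n
    rw [hpm n, hpp n]
    split <;> split <;> omega
  · intro n hn
    obtain ⟨h1, h2⟩ := hp d n hn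
    rw [hpm n, hpp n, if_pos h1, if_pos h2]
    exact ⟨rfl, rfl⟩
end

section
/- Let p : ℕ → ℤ be a perversity (i.e. for all naturals m ≤ n, p m ≤ p n and (m : ℤ) − p m ≤ (n : ℤ) − p n), let d ≥ 2 be an integer, and define p⁻ : ℕ → ℤ by p⁻ n = p n − 1 if p d ≤ p n and p⁻ n = p n otherwise. If q : ℕ → ℤ is any perversity such that q n ≤ p n for all n and q n = p n − 1 for all n ≥ d, then q n ≤ p⁻ n for all n. (Thus p⁻ is the unique maximal perversity among all q which, together with some r, satisfy the hypotheses of the intermediate-extension construction.) -/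
/-- Maximality of `p⁻` in Proposition 2.8: any perversity `q ≤ p` with
`q = p - 1` in codimension `≥ d` satisfies `q ≤ p⁻`. -/
theorem perversity_pm_maximal (p : ℕ → ℤ) (hp : IsPerversity p) (d : ℕ) (hd : 2 ≤ d)
    (pm : ℕ → ℤ) (hpm : ∀ n, pm n = if p d ≤ p n then p n - 1 else p n)
    (q : ℕ → ℤ) (hq : IsPerversity q)
    (hqp : ∀ n, q n ≤ p n) (hqd : ∀ n, d ≤ n → q n = p n - 1) :
    ∀ n, q n ≤ pm n := by
  intro n
  rw [hpm n]
  split_ifs with h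
  · rcases le_total d n with hdn | hnd
    · exact (hqd n hdn).le.trans (by omega)
    · have h1 : q n ≤ q d := (hq n d hnd).1
      have h2 : q d = p d - 1 := hqd d le_rfl
      omega
  · exact hqp n
end

section
/- Let p : ℕ → ℤ be a perversity (i.e. for all naturals m ≤ n, p m ≤ p n and (m : ℤ) − p m ≤ (n : ℤ) − p n), let d ≥ 2 be an integer, and define p⁺ : ℕ → ℤ by p⁺ n = p n + 1 if (d : ℤ) − p d ≤ (n : ℤ) − p n and p⁺ n = p n otherwise. If r : ℕ → ℤ is any perversity such that p n ≤ r n for all n and r n = p n + 1 for all n ≥ d, then p⁺ n ≤ r n for all n. (Thus p⁺ is the unique minimal perversity among all such r.) -/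
/-- Minimality of `p⁺` in Proposition 2.8: any perversity `r ≥ p` with
`r = p + 1` in codimension `≥ d` satisfies `p⁺ ≤ r`. -/
theorem perversity_pp_minimal (p : ℕ → ℤ) (hp : IsPerversity p) (d : ℕ) (hd : 2 ≤ d)
    (pp : ℕ → ℤ) (hpp : ∀ n, pp n = if (d : ℤ) - p d ≤ (n : ℤ) - p n then p n + 1 else p n)
    (r : ℕ → ℤ) (hr : IsPerversity r)
    (hpr : ∀ n, p n ≤ r n) (hrd : ∀ n, d ≤ n → r n = p n + 1) :
    ∀ n, pp n ≤ r n := by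
  intro n
  rw [hpp n]
  split_ifs with h
  · rcases le_or_gt d n with hdn | hnd
    · rw [hrd n hdn]
    · have h1 : (n : ℤ) - r n ≤ (d : ℤ) - r d := (hr n d hnd.le).2
      have h2 : r d = p d + 1 := hrd d le_rfl
      omega
  · exact hpr n
end

section
/- Let C be a triangulated category equipped with two t-structures t₁ and t₂ (cohomological convention) such that every object satisfying t₁.GE 2 satisfies t₂.GE 0, and every object satisfying t₂.LE (−2) satisfies t₁.LE 0. Then for every object X of C, both the object obtained by applying the t₂-truncation τ^{t₂}_{≥0} to X and then the t₁-truncation τ^{t₁}_{≤0}, and the object obtained by applying τ^{t₁}_{≤0} to X and then τ^{t₂}_{≥0}, satisfy both t₁.LE 0 and t₂.GE 0. -/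
open CategoryTheory CategoryTheory.Pretriangulated CategoryTheory.Triangulated CategoryTheory.Limits

namespace CategoryTheory.Triangulated.TStructure

variable {C : Type*} [Category C] [Preadditive C] [Limits.HasZeroObject C] [HasShift C ℤ]
  [∀ n : ℤ, (shiftFunctor C n).Additive] [Pretriangulated C] (t : TStructure C)

/-- Generalized orthogonality: any map from an object ≤ a to an object ≥ b with a < b is zero. -/
lemma zero_of_le_lt_ge {A B : C} (f : A ⟶ B) (a b : ℤ) (hab : a < b)
    (hA : t.le a A) (hB : t.ge b B) : f = 0 := by
  have hA' : t.le 0 (A⟦a⟧) := t.le_shift a a 0 (by omega) A hA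
  have hB' : t.ge (b - a) (B⟦a⟧) := t.ge_shift b a (b - a) (by omega) B hB
  have hB'' : t.ge 1 (B⟦a⟧) := t.ge_antitone (by omega) _ hB'
  have : (shiftFunctor C a).map f = 0 := t.zero' _ hA' hB''
  apply (shiftFunctor C a).map_injective
  rw [this, Functor.map_zero]

/-- `t.ge n` is closed under extensions. -/
lemma ge_ext (n : ℤ) (T : Triangle C) (hT : T ∈ distTriang C)
    (h₁ : t.ge n T.obj₁) (h₃ : t.ge n T.obj₃) : t.ge n T.obj₂ := by
  obtain ⟨A, B, hA, hB, a, p, δ, mem⟩ := t.exists_triangle T.obj₂ (n - 1) n (by omega)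
  -- the map `a : A ⟶ T.obj₂` is zero
  have ha : a = 0 := by
    obtain ⟨a', ha'⟩ := Triangle.coyoneda_exact₂ T hT a
      (t.zero_of_le_lt_ge (a ≫ T.mor₂) (n - 1) n (by omega) hA h₃)
    rw [ha', t.zero_of_le_lt_ge a' (n - 1) n (by omega) hA h₁]; simp
  -- hence the connecting map `δ : B ⟶ A⟦1⟧` admits a section
  obtain ⟨s, hs⟩ := Triangle.coyoneda_exact₃ _ (rot_of_distTriang _ mem) (𝟙 (A⟦(1 : ℤ)⟧))
    (by subst ha; exact (Category.id_comp _).trans (by show -(shiftFunctor C (1 : ℤ)).map (0 : A ⟶ T.obj₂) = 0; rw [Functor.map_zero, neg_zero]))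
  -- the section is zero, hence `A⟦1⟧` is zero
  have hs0 : s = 0 := t.zero_of_le_lt_ge s (n - 2) n (by omega)
    (t.le_shift (n - 1) 1 (n - 2) (by omega) A hA) hB
  have hzero : Limits.IsZero (A⟦(1 : ℤ)⟧) := by
    rw [Limits.IsZero.iff_id_eq_zero, hs, hs0]; exact Limits.zero_comp
  have hAzero : Limits.IsZero A := by
    rw [Limits.IsZero.iff_id_eq_zero]
    apply (shiftFunctor C (1 : ℤ)).map_injective
    exact hzero.eq_of_src _ _
  -- hence `p : T.obj₂ ⟶ B` is an isomorphism
  have : IsIso p := (Triangle.isZero₁_iff_isIso₂ _ mem).1 hAzero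
  exact ((t.ge n).prop_iff_of_iso (asIso p).symm).1 hB

/-- `t.le n` is closed under extensions. -/
lemma le_ext (n : ℤ) (T : Triangle C) (hT : T ∈ distTriang C)
    (h₁ : t.le n T.obj₁) (h₃ : t.le n T.obj₃) : t.le n T.obj₂ := by
  obtain ⟨A, B, hA, hB, a, p, δ, mem⟩ := t.exists_triangle T.obj₂ n (n + 1) rfl
  -- the map `p : T.obj₂ ⟶ B` is zero
  have hp : p = 0 := by
    obtain ⟨g', hg'⟩ := Triangle.yoneda_exact₂ T hT p
      (t.zero_of_le_lt_ge (T.mor₁ ≫ p) n (n + 1) (by omega) h₁ hB)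
    rw [hg', t.zero_of_le_lt_ge g' n (n + 1) (by omega) h₃ hB]; simp
  -- hence `δ` admits a retraction
  obtain ⟨r, hr⟩ := Triangle.yoneda_exact₃ _ mem (𝟙 B) (by subst hp; exact Limits.zero_comp)
  have hr0 : r = 0 := t.zero_of_le_lt_ge r (n - 1) (n + 1) (by omega)
    (t.le_shift n 1 (n - 1) (by omega) A hA) hB
  have hBzero : Limits.IsZero B := by
    rw [Limits.IsZero.iff_id_eq_zero, hr, hr0]; exact Limits.comp_zero
  have : IsIso a := (Triangle.isZero₃_iff_isIso₁ _ mem).1 hBzero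
  exact ((t.le n).prop_iff_of_iso (asIso a)).1 hA

end CategoryTheory.Triangulated.TStructure

/-- Abstract core of Proposition 2.4: if `t₁.ge 2 ⊆ t₂.ge 0` and `t₂.le (-2) ⊆ t₁.le 0`,
then both composites of truncations `τ^{t₁}_{≤0} ∘ τ^{t₂}_{≥0}` and
`τ^{t₂}_{≥0} ∘ τ^{t₁}_{≤0}` (described via their defining distinguished triangles)
take values in `t₁.le 0 ∩ t₂.ge 0`. -/
theorem truncations_land_in_intersection
    {C : Type*} [Category C] [Preadditive C] [Limits.HasZeroObject C] [HasShift C ℤ]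
    [∀ n : ℤ, (shiftFunctor C n).Additive] [Pretriangulated C]
    (t₁ t₂ : TStructure C)
    (h₁ : ∀ X : C, t₁.ge 2 X → t₂.ge 0 X)
    (h₂ : ∀ X : C, t₂.le (-2) X → t₁.le 0 X) :
    -- first applying `τ^{t₂}_{≥0}` to `X` (giving `Y`), then `τ^{t₁}_{≤0}` to `Y` (giving `W`)
    (∀ (X A Y W B : C)
      (f : A ⟶ X) (g : X ⟶ Y) (h : Y ⟶ A⟦(1 : ℤ)⟧)
      (_ : t₂.le (-1) A) (_ : t₂.ge 0 Y)
      (_ : Triangle.mk f g h ∈ distTriang C)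
      (f' : W ⟶ Y) (g' : Y ⟶ B) (h' : B ⟶ W⟦(1 : ℤ)⟧)
      (_ : t₁.le 0 W) (_ : t₁.ge 1 B)
      (_ : Triangle.mk f' g' h' ∈ distTriang C),
      t₁.le 0 W ∧ t₂.ge 0 W) ∧
    -- first applying `τ^{t₁}_{≤0}` to `X` (giving `W`), then `τ^{t₂}_{≥0}` to `W` (giving `V`)
    (∀ (X W B A V : C)
      (f : W ⟶ X) (g : X ⟶ B) (h : B ⟶ W⟦(1 : ℤ)⟧)
      (_ : t₁.le 0 W) (_ : t₁.ge 1 B)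
      (_ : Triangle.mk f g h ∈ distTriang C)
      (f' : A ⟶ W) (g' : W ⟶ V) (h' : V ⟶ A⟦(1 : ℤ)⟧)
      (_ : t₂.le (-1) A) (_ : t₂.ge 0 V)
      (_ : Triangle.mk f' g' h' ∈ distTriang C),
      t₁.le 0 V ∧ t₂.ge 0 V) := by
  constructor
  · intro X A Y W B f g h hA hY hT f' g' h' hW hB hT'
    refine ⟨hW, ?_⟩
    -- rotate the second triangle backwards: `B⟦-1⟧ ⟶ W ⟶ Y`
    have mem := inv_rot_of_distTriang _ hT'
    refine t₂.ge_ext 0 _ mem ?_ hY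
    -- `B⟦-1⟧ ∈ t₁.GE 2 ⊆ t₂.GE 0`
    exact h₁ _ (t₁.ge_shift 1 (-1) 2 (by omega) B hB)
  · intro X W B A V f g h hW hB hT f' g' h' hA hV hT'
    refine ⟨?_, hV⟩
    -- rotate the second triangle: `W ⟶ V ⟶ A⟦1⟧`
    have mem := rot_of_distTriang _ hT'
    refine t₁.le_ext 0 _ mem hW ?_
    -- `A⟦1⟧ ∈ t₂.LE (-2) ⊆ t₁.LE 0`
    exact h₂ _ (t₂.le_shift (-1) 1 (-2) (by omega) A hA)
end

section
/- Let a and b be elements of Equiv.Perm (Fin 5) with orderOf a = 4 and orderOf b = 2, and let H = Subgroup.closure {a, b}. Then either Nat.card H ≠ 24, or H is conjugate to the standard parabolic copy of S₄, namely Subgroup.closure {Equiv.swap 0 1, Equiv.swap 1 2, Equiv.swap 2 3}. -/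
open Equiv Equiv.Perm Subgroup MulAction

private abbrev K5 : Subgroup (Equiv.Perm (Fin 5)) :=
  Subgroup.closure {Equiv.swap 0 1, Equiv.swap 1 2, Equiv.swap 2 3}

instance : MulAction.IsPretransitive (Equiv.Perm (Fin 5)) (Fin 5) :=
  ⟨fun x y => ⟨Equiv.swap x y, Equiv.swap_apply_left x y⟩⟩

private lemma h01 : Equiv.swap (0 : Fin 5) 1 ∈ K5 :=
  Subgroup.subset_closure (Set.mem_insert _ _)
private lemma h12 : Equiv.swap (1 : Fin 5) 2 ∈ K5 :=
  Subgroup.subset_closure (Set.mem_insert_of_mem _ (Set.mem_insert _ _))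
private lemma h23 : Equiv.swap (2 : Fin 5) 3 ∈ K5 :=
  Subgroup.subset_closure (Set.mem_insert_of_mem _ (Set.mem_insert_of_mem _ rfl))

private lemma swap_mem_K5 {x y : Fin 5} (hx : x ≠ 4) (hy : y ≠ 4) :
    Equiv.swap x y ∈ K5 := by
  have h02 : Equiv.swap (0 : Fin 5) 2 ∈ K5 := SubmonoidClass.swap_mem_trans _ h01 h12
  have h03 : Equiv.swap (0 : Fin 5) 3 ∈ K5 := SubmonoidClass.swap_mem_trans _ h02 h23
  have h13 : Equiv.swap (1 : Fin 5) 3 ∈ K5 := SubmonoidClass.swap_mem_trans _ h12 h23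
  have hs : ∀ u v : Fin 5, Equiv.swap u v ∈ K5 → Equiv.swap v u ∈ K5 :=
    fun u v h => (Equiv.swap_comm u v) ▸ h
  fin_cases x <;> fin_cases y <;>
    first
      | exact absurd rfl hx
      | exact absurd rfl hy
      | (rw [Equiv.swap_self]; exact K5.one_mem)
      | exact h01 | exact h12 | exact h23 | exact h02 | exact h03 | exact h13
      | exact hs _ _ h01 | exact hs _ _ h12 | exact hs _ _ h23
      | exact hs _ _ h02 | exact hs _ _ h03 | exact hs _ _ h13

private lemma stab4_eq : MulAction.stabilizer (Equiv.Perm (Fin 5)) (4 : Fin 5) = K5 := by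
  apply le_antisymm
  · intro σ hσ
    have h4 : σ 4 = 4 := hσ
    rw [mem_closure_isSwap (by rintro f (rfl | rfl | rfl) <;> exact ⟨_, _, by decide, rfl⟩)]
    refine ⟨Set.toFinite _, fun x => ?_⟩
    by_cases hx : x = 4
    · subst hx
      have : σ • (4 : Fin 5) = 4 := h4
      rw [show σ (4 : Fin 5) = 4 from h4]
      exact MulAction.mem_orbit_self _
    · have hσx : σ x ≠ 4 := fun h => hx (σ.injective (h.trans h4.symm))
      exact ⟨⟨Equiv.swap x (σ x), swap_mem_K5 hx hσx⟩, Equiv.swap_apply_left x (σ x)⟩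
  · rw [Subgroup.closure_le]
    rintro f (rfl | rfl | rfl) <;> exact MulAction.mem_stabilizer_iff.mpr (by decide)

private lemma card_stab (x : Fin 5) :
    Nat.card (MulAction.stabilizer (Equiv.Perm (Fin 5)) x) = 24 := by
  have h1 := Subgroup.index_mul_card (MulAction.stabilizer (Equiv.Perm (Fin 5)) x)
  rw [MulAction.index_stabilizer_of_transitive] at h1
  have h2 : Nat.card (Fin 5) = 5 := by simp
  have h3 : Nat.card (Equiv.Perm (Fin 5)) = 120 := by
    simp [Nat.card_eq_fintype_card, Fintype.card_perm]
    decide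
  rw [h2, h3] at h1
  omega

private lemma cycleType_eq_four {a : Equiv.Perm (Fin 5)} (ha : orderOf a = 4) :
    a.cycleType = {4} := by
  have hlcm : a.cycleType.lcm = 4 := by rw [Equiv.Perm.lcm_cycleType, ha]
  have hsum : a.cycleType.sum ≤ 5 := by
    rw [Equiv.Perm.sum_cycleType]
    simpa using Finset.card_le_univ a.support
  have h4 : 4 ∈ a.cycleType := by
    by_contra h
    have h2 : a.cycleType.lcm ∣ 2 := by
      rw [Multiset.lcm_dvd]
      intro n hn
      have hd : n ∣ 4 := hlcm ▸ Multiset.dvd_lcm hn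
      have h2n : 2 ≤ n := Equiv.Perm.two_le_of_mem_cycleType hn
      have hle : n ≤ 4 := Nat.le_of_dvd (by norm_num) hd
      have hne : n ≠ 4 := fun e => h (e ▸ hn)
      interval_cases n
      · norm_num
      · norm_num at hd
      · exact absurd rfl hne
    rw [hlcm] at h2
    norm_num at h2
  have hcons : 4 ::ₘ a.cycleType.erase 4 = a.cycleType := Multiset.cons_erase h4
  have hz : a.cycleType.erase 4 = 0 := by
    by_contra hne
    obtain ⟨n, hn⟩ := Multiset.exists_mem_of_ne_zero hne
    have h2n : 2 ≤ n := Equiv.Perm.two_le_of_mem_cycleType (Multiset.mem_of_mem_erase hn)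
    have hle : n ≤ (a.cycleType.erase 4).sum :=
      Multiset.single_le_sum (fun _ _ => Nat.zero_le _) _ hn
    have hs : a.cycleType.sum = 4 + (a.cycleType.erase 4).sum := by
      conv_lhs => rw [← hcons]
      rw [Multiset.sum_cons]
    omega
  rw [← hcons, hz]
  rfl

/-- Hand calculation from Lemma 7.5: a subgroup of `𝔖₅` generated by an element of
order 4 and an element of order 2 either has size different from 24 or is conjugate
to the standard parabolic copy of `𝔖₄`. -/
theorem s5_order4_order2_subgroup (a b : Equiv.Perm (Fin 5))
    (ha : orderOf a = 4) (hb : orderOf b = 2)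
    (H : Subgroup (Equiv.Perm (Fin 5))) (hH : H = Subgroup.closure {a, b}) :
    Nat.card H ≠ 24 ∨
      ∃ g : Equiv.Perm (Fin 5), H.map (MulAut.conj g).toMonoidHom =
        Subgroup.closure {Equiv.swap 0 1, Equiv.swap 1 2, Equiv.swap 2 3} := by
  by_cases hcard : Nat.card H = 24
  · right
    have hct := cycleType_eq_four ha
    have hcyc : a.IsCycle := Equiv.Perm.card_cycleType_eq_one.mp (by rw [hct]; rfl)
    have hsupp : a.support.card = 4 := by
      have h := Equiv.Perm.sum_cycleType a
      rw [hct] at h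
      simpa using h.symm
    obtain ⟨x, hx⟩ : ∃ x, x ∉ a.support := by
      by_contra h
      push_neg at h
      have : a.support = Finset.univ := Finset.eq_univ_iff_forall.mpr h
      rw [this] at hsupp
      simp at hsupp
    have hax : a x = x := Equiv.Perm.notMem_support.mp hx
    have hsupp_eq : a.support = Finset.univ.erase x := by
      apply Finset.eq_of_subset_of_card_le
      · intro y hy
        exact Finset.mem_erase.mpr ⟨fun e => hx (e ▸ hy), Finset.mem_univ y⟩
      · rw [Finset.card_erase_of_mem (Finset.mem_univ x), hsupp]
        simp
    by_cases hbx : b x = x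
    · have hle : H ≤ MulAction.stabilizer (Equiv.Perm (Fin 5)) x := by
        rw [hH, Subgroup.closure_le]
        rintro f (rfl | rfl)
        · exact MulAction.mem_stabilizer_iff.mpr hax
        · exact MulAction.mem_stabilizer_iff.mpr hbx
      have hEq : H = MulAction.stabilizer (Equiv.Perm (Fin 5)) x :=
        Subgroup.eq_of_le_of_card_ge hle (by rw [hcard, card_stab])
      refine ⟨Equiv.swap x 4, ?_⟩
      rw [hEq, ← MulAction.stabilizer_smul_eq_stabilizer_map_conj,
        show Equiv.swap x 4 • x = (4 : Fin 5) from Equiv.swap_apply_left x 4]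
      exact stab4_eq
    · exfalso
      have haH : a ∈ H := hH ▸ Subgroup.subset_closure (Set.mem_insert _ _)
      have hbH : b ∈ H := hH ▸ Subgroup.subset_closure (Set.mem_insert_of_mem _ rfl)
      have horb : ∀ y : Fin 5, y ∈ MulAction.orbit H x := by
        intro y
        by_cases hy : y = x
        · rw [hy]; exact MulAction.mem_orbit_self x
        · have hys : a y ≠ y := by
            rw [← Equiv.Perm.mem_support, hsupp_eq]
            exact Finset.mem_erase.mpr ⟨hy, Finset.mem_univ _⟩
          have hbs : a (b x) ≠ b x := by
            rw [← Equiv.Perm.mem_support, hsupp_eq]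
            exact Finset.mem_erase.mpr ⟨hbx, Finset.mem_univ _⟩
          obtain ⟨k, hk⟩ := hcyc.sameCycle hbs hys
          exact ⟨⟨a ^ k * b, mul_mem (Subgroup.zpow_mem H haH k) hbH⟩, hk⟩
      have horb_univ : MulAction.orbit H x = Set.univ := Set.eq_univ_iff_forall.mpr horb
      have hdvd : (MulAction.stabilizer H x).index ∣ Nat.card H :=
        Subgroup.index_dvd_card _
      rw [MulAction.index_stabilizer, horb_univ, Set.ncard_univ, hcard] at hdvd
      simp [Nat.card_eq_fintype_card] at hdvd
  · exact Or.inl hcard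
end

section
/- Let P be a subgroup of Equiv.Perm (Fin 5) conjugate to the standard parabolic copy of S₃ (that is, to Subgroup.closure {Equiv.swap 0 1, Equiv.swap 1 2}), let b ∈ Equiv.Perm (Fin 5) have orderOf b = 2, and let H = Subgroup.closure ((P : Set (Equiv.Perm (Fin 5))) ∪ {b}). Then either Nat.card H ≠ 12, or H is conjugate to the standard parabolic copy of S₃ × S₂, namely Subgroup.closure {Equiv.swap 0 1, Equiv.swap 1 2, Equiv.swap 3 4}. -/
set_option maxRecDepth 20000

open Equiv Subgroup

/-- The pointwise stabilizer of `{3,4}` in `S₅`. -/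
private def Lgrp : Subgroup (Equiv.Perm (Fin 5)) where
  carrier := {σ | σ 3 = 3 ∧ σ 4 = 4}
  one_mem' := ⟨rfl, rfl⟩
  mul_mem' := by
    rintro a b ⟨ha3, ha4⟩ ⟨hb3, hb4⟩
    exact ⟨by simp [Equiv.Perm.mul_apply, hb3, ha3], by simp [Equiv.Perm.mul_apply, hb4, ha4]⟩
  inv_mem' := by
    rintro a ⟨ha3, ha4⟩
    constructor
    · conv_lhs => rw [← ha3]
      simp
    · conv_lhs => rw [← ha4]
      simp

/-- The setwise stabilizer of `{3,4}` in `S₅`. -/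
private def Kgrp : Subgroup (Equiv.Perm (Fin 5)) where
  carrier := {σ | σ 3 = 3 ∧ σ 4 = 4 ∨ σ 3 = 4 ∧ σ 4 = 3}
  one_mem' := Or.inl ⟨rfl, rfl⟩
  mul_mem' := by
    rintro a b (⟨ha3, ha4⟩ | ⟨ha3, ha4⟩) (⟨hb3, hb4⟩ | ⟨hb3, hb4⟩) <;>
      simp [Equiv.Perm.mul_apply, hb3, hb4, ha3, ha4]
  inv_mem' := by
    rintro a (⟨ha3, ha4⟩ | ⟨ha3, ha4⟩)
    · refine Or.inl ⟨?_, ?_⟩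
      · conv_lhs => rw [← ha3]; simp
      · conv_lhs => rw [← ha4]; simp
    · refine Or.inr ⟨?_, ?_⟩
      · conv_lhs => rw [← ha4]; simp
      · conv_lhs => rw [← ha3]; simp

private lemma mem_Lgrp_iff {σ : Equiv.Perm (Fin 5)} :
    σ ∈ Lgrp ↔ σ 3 = 3 ∧ σ 4 = 4 := Iff.rfl

private lemma mem_Kgrp_iff {σ : Equiv.Perm (Fin 5)} :
    σ ∈ Kgrp ↔ (σ 3 = 3 ∧ σ 4 = 4 ∨ σ 3 = 4 ∧ σ 4 = 3) := Iff.rfl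

private instance : DecidablePred (· ∈ Lgrp) := fun σ =>
  decidable_of_iff (σ 3 = 3 ∧ σ 4 = 4) Iff.rfl

private instance : DecidablePred (· ∈ Kgrp) := fun σ =>
  decidable_of_iff (σ 3 = 3 ∧ σ 4 = 4 ∨ σ 3 = 4 ∧ σ 4 = 3) Iff.rfl

private lemma Lgrp_eq_closure :
    Lgrp = Subgroup.closure ({Equiv.swap 0 1, Equiv.swap 1 2} : Set (Equiv.Perm (Fin 5))) := by
  apply le_antisymm
  · intro σ hσ
    obtain ⟨h3, h4⟩ := mem_Lgrp_iff.mp hσ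
    have henum : σ = 1 ∨ σ = Equiv.swap 0 1 ∨ σ = Equiv.swap 1 2 ∨
        σ = Equiv.swap 0 1 * Equiv.swap 1 2 * Equiv.swap 0 1 ∨
        σ = Equiv.swap 0 1 * Equiv.swap 1 2 ∨ σ = Equiv.swap 1 2 * Equiv.swap 0 1 := by
      revert h3 h4; revert σ; decide
    have h01 : Equiv.swap 0 1 ∈
        Subgroup.closure ({Equiv.swap 0 1, Equiv.swap 1 2} : Set (Equiv.Perm (Fin 5))) :=
      subset_closure (Or.inl rfl)
    have h12 : Equiv.swap 1 2 ∈
        Subgroup.closure ({Equiv.swap 0 1, Equiv.swap 1 2} : Set (Equiv.Perm (Fin 5))) :=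
      subset_closure (Or.inr rfl)
    rcases henum with rfl | rfl | rfl | rfl | rfl | rfl
    · exact one_mem _
    · exact h01
    · exact h12
    · exact mul_mem (mul_mem h01 h12) h01
    · exact mul_mem h01 h12
    · exact mul_mem h12 h01
  · rw [closure_le]
    rintro σ (rfl | rfl)
    · exact mem_Lgrp_iff.mpr ⟨by decide, by decide⟩
    · exact mem_Lgrp_iff.mpr ⟨by decide, by decide⟩

private lemma Kgrp_eq_closure :
    Kgrp = Subgroup.closure
      ({Equiv.swap 0 1, Equiv.swap 1 2, Equiv.swap 3 4} : Set (Equiv.Perm (Fin 5))) := by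
  apply le_antisymm
  · intro σ hσ
    have hσ' := mem_Kgrp_iff.mp hσ
    have henum : σ = 1 ∨ σ = Equiv.swap 0 1 ∨ σ = Equiv.swap 1 2 ∨
        σ = Equiv.swap 0 1 * Equiv.swap 1 2 * Equiv.swap 0 1 ∨
        σ = Equiv.swap 0 1 * Equiv.swap 1 2 ∨ σ = Equiv.swap 1 2 * Equiv.swap 0 1 ∨
        σ = Equiv.swap 3 4 ∨ σ = Equiv.swap 0 1 * Equiv.swap 3 4 ∨
        σ = Equiv.swap 1 2 * Equiv.swap 3 4 ∨
        σ = Equiv.swap 0 1 * Equiv.swap 1 2 * Equiv.swap 0 1 * Equiv.swap 3 4 ∨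
        σ = Equiv.swap 0 1 * Equiv.swap 1 2 * Equiv.swap 3 4 ∨
        σ = Equiv.swap 1 2 * Equiv.swap 0 1 * Equiv.swap 3 4 := by
      revert hσ'; revert σ; decide
    have h01 : Equiv.swap 0 1 ∈ Subgroup.closure
        ({Equiv.swap 0 1, Equiv.swap 1 2, Equiv.swap 3 4} : Set (Equiv.Perm (Fin 5))) :=
      subset_closure (Or.inl rfl)
    have h12 : Equiv.swap 1 2 ∈ Subgroup.closure
        ({Equiv.swap 0 1, Equiv.swap 1 2, Equiv.swap 3 4} : Set (Equiv.Perm (Fin 5))) :=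
      subset_closure (Or.inr (Or.inl rfl))
    have h34 : Equiv.swap 3 4 ∈ Subgroup.closure
        ({Equiv.swap 0 1, Equiv.swap 1 2, Equiv.swap 3 4} : Set (Equiv.Perm (Fin 5))) :=
      subset_closure (Or.inr (Or.inr rfl))
    rcases henum with rfl | rfl | rfl | rfl | rfl | rfl | rfl | rfl | rfl | rfl | rfl | rfl
    · exact one_mem _
    · exact h01
    · exact h12
    · exact mul_mem (mul_mem h01 h12) h01
    · exact mul_mem h01 h12
    · exact mul_mem h12 h01
    · exact h34
    · exact mul_mem h01 h34
    · exact mul_mem h12 h34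
    · exact mul_mem (mul_mem (mul_mem h01 h12) h01) h34
    · exact mul_mem (mul_mem h01 h12) h34
    · exact mul_mem (mul_mem h12 h01) h34
  · rw [closure_le]
    rintro σ (rfl | rfl | rfl)
    · exact mem_Kgrp_iff.mpr (Or.inl ⟨by decide, by decide⟩)
    · exact mem_Kgrp_iff.mpr (Or.inl ⟨by decide, by decide⟩)
    · exact mem_Kgrp_iff.mpr (Or.inr ⟨by decide, by decide⟩)

private lemma card_Lgrp : Nat.card Lgrp = 6 := by
  rw [Nat.card_eq_fintype_card]; decide

private lemma card_Kgrp : Nat.card Kgrp = 12 := by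
  rw [Nat.card_eq_fintype_card]; decide

/-- Key finite computation: if the subgroup of `S₅` generated by the standard `S₃`
together with one more element `c` has order 12, it is the standard `S₃ × S₂`. -/
private lemma key_lemma (c : Equiv.Perm (Fin 5))
    (h12 : Nat.card (Subgroup.closure
      (({Equiv.swap 0 1, Equiv.swap 1 2} : Set (Equiv.Perm (Fin 5))) ∪ {c})) = 12) :
    Subgroup.closure (({Equiv.swap 0 1, Equiv.swap 1 2} : Set (Equiv.Perm (Fin 5))) ∪ {c}) =
      Subgroup.closure {Equiv.swap 0 1, Equiv.swap 1 2, Equiv.swap 3 4} := by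
  set K' : Subgroup (Equiv.Perm (Fin 5)) :=
    Subgroup.closure (({Equiv.swap 0 1, Equiv.swap 1 2} : Set (Equiv.Perm (Fin 5))) ∪ {c})
    with hK'def
  have hLK' : Lgrp ≤ K' := by
    rw [Lgrp_eq_closure]
    exact closure_mono Set.subset_union_left
  have hcK' : c ∈ K' := subset_closure (Or.inr rfl)
  -- the subgroup L has index 2 in K'
  have hcardL' : Nat.card (Lgrp.subgroupOf K') = 6 := by
    rw [Nat.card_congr (Subgroup.subgroupOfEquivOfLe hLK').toEquiv]
    exact card_Lgrp
  have hidx : (Lgrp.subgroupOf K').index = 2 := by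
    have := Subgroup.card_mul_index (Lgrp.subgroupOf K')
    rw [hcardL', h12] at this
    omega
  -- hence c normalizes L: conjugating the 3-cycle a = (0 1 2) stays in L
  set a : Equiv.Perm (Fin 5) := Equiv.swap 0 1 * Equiv.swap 1 2 with ha
  have haL : a ∈ Lgrp := mem_Lgrp_iff.mpr ⟨by decide, by decide⟩
  have haK' : a ∈ K' := hLK' haL
  have hconj : c * a * c⁻¹ ∈ Lgrp := by
    have haL' : (⟨a, haK'⟩ : K') ∈ Lgrp.subgroupOf K' := haL
    have hmem : (⟨c, hcK'⟩ : K') * ⟨a, haK'⟩ * (⟨c, hcK'⟩ : K')⁻¹ ∈ Lgrp.subgroupOf K' := by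
      rw [Subgroup.mul_mem_iff_of_index_two hidx, Subgroup.mul_mem_iff_of_index_two hidx,
        inv_mem_iff]
      tauto
    exact hmem
  -- hence c⁻¹ maps {3,4} to itself
  obtain ⟨hfix3, hfix4⟩ := mem_Lgrp_iff.mp hconj
  have h3 : a (c⁻¹ 3) = c⁻¹ 3 := by
    rw [Equiv.Perm.mul_apply, Equiv.Perm.mul_apply] at hfix3
    have := congrArg (fun x => c⁻¹ x) hfix3
    simpa using this
  have h4 : a (c⁻¹ 4) = c⁻¹ 4 := by
    rw [Equiv.Perm.mul_apply, Equiv.Perm.mul_apply] at hfix4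
    have := congrArg (fun x => c⁻¹ x) hfix4
    simpa using this
  have hfixa : ∀ x : Fin 5, a x = x → x = 3 ∨ x = 4 := by
    rw [ha]; decide
  have hcinvK : c⁻¹ ∈ Kgrp := by
    refine mem_Kgrp_iff.mpr ?_
    rcases hfixa _ h3 with h3' | h3' <;> rcases hfixa _ h4 with h4' | h4'
    · exact absurd (Equiv.injective _ (h3'.trans h4'.symm) : (3 : Fin 5) = 4) (by decide)
    · exact Or.inl ⟨h3', h4'⟩
    · exact Or.inr ⟨h3', h4'⟩
    · exact absurd (Equiv.injective _ (h3'.trans h4'.symm) : (3 : Fin 5) = 4) (by decide)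
  have hcK : c ∈ Kgrp := by
    have := Kgrp.inv_mem hcinvK
    simpa using this
  -- so K' is contained in the setwise stabilizer, which has order 12 as well
  have hK'K : K' ≤ Kgrp := by
    rw [hK'def, closure_le]
    rintro σ ((rfl | rfl) | rfl)
    · exact mem_Kgrp_iff.mpr (Or.inl ⟨by decide, by decide⟩)
    · exact mem_Kgrp_iff.mpr (Or.inl ⟨by decide, by decide⟩)
    · exact hcK
  rw [← Kgrp_eq_closure]
  exact Subgroup.eq_of_le_of_card_ge hK'K (by rw [card_Kgrp, h12])

/-- Hand calculation from Lemma 7.5: a subgroup of `𝔖₅` generated by a conjugate of the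
standard `𝔖₃` together with an element of order 2 either has size different from 12 or
is conjugate to the standard parabolic copy of `𝔖₃ × 𝔖₂`. -/
theorem s5_s3_order2_subgroup (P : Subgroup (Equiv.Perm (Fin 5)))
    (hP : ∃ g : Equiv.Perm (Fin 5), P.map (MulAut.conj g).toMonoidHom =
      Subgroup.closure {Equiv.swap 0 1, Equiv.swap 1 2})
    (b : Equiv.Perm (Fin 5)) (hb : orderOf b = 2)
    (H : Subgroup (Equiv.Perm (Fin 5)))
    (hH : H = Subgroup.closure ((P : Set (Equiv.Perm (Fin 5))) ∪ {b})) :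
    Nat.card H ≠ 12 ∨
      ∃ g : Equiv.Perm (Fin 5), H.map (MulAut.conj g).toMonoidHom =
        Subgroup.closure {Equiv.swap 0 1, Equiv.swap 1 2, Equiv.swap 3 4} := by
  by_cases h12 : Nat.card H = 12
  swap
  · exact Or.inl h12
  right
  obtain ⟨g, hg⟩ := hP
  refine ⟨g, ?_⟩
  set f : Equiv.Perm (Fin 5) →* Equiv.Perm (Fin 5) := (MulAut.conj g).toMonoidHom with hf
  have hfinj : Function.Injective f := (MulAut.conj g).injective
  have himg : (⇑f '' ((P : Set (Equiv.Perm (Fin 5))) ∪ {b}) : Set (Equiv.Perm (Fin 5))) =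
      ↑(P.map f) ∪ {f b} := by
    rw [Set.image_union, Set.image_singleton, Subgroup.coe_map]
  have hmap : H.map f = Subgroup.closure
      (({Equiv.swap 0 1, Equiv.swap 1 2} : Set (Equiv.Perm (Fin 5))) ∪ {f b}) := by
    rw [hH, MonoidHom.map_closure, himg, Subgroup.closure_union, Subgroup.closure_eq, hg,
      ← Subgroup.closure_union]
  have hcard : Nat.card (H.map f) = 12 := by
    rw [← h12]
    exact (Nat.card_congr (Subgroup.equivMapOfInjective H f hfinj).toEquiv).symm
  rw [hmap] at hcard ⊢
  exact key_lemma (f b) hcard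
end

section
/- In the dihedral group D of order 8 (DihedralGroup 4), let s = sr 0 and t = sr 1, so that s and t are elements of order 2 with (s * t) of order 4 and D generated by {s, t} (D is the Weyl group of type B₂ with simple reflections s and t). Consider the four standard parabolic subgroups ⊥, S := Subgroup.zpowers s, T := Subgroup.zpowers t, and ⊤, and the assignment K(⊥) = ⊥, K(S) = S, K(T) = Subgroup.zpowers ((s * t)^2), K(⊤) = ⊤. Then: (i) Nat.card (K H) = Nat.card H for each of the four subgroups H; (ii) whenever H₁ and H₂ are among these four subgroups and H₁ is conjugate to a subgroup of H₂, the subgroup K(H₁) is conjugate to a subgroup of K(H₂); and yet (iii) K(T) = Subgroup.zpowers ((s * t)^2) is not conjugate to T. -/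
open DihedralGroup Subgroup

private lemma mem_zpowers_two {G : Type*} [Group G] {x y : G} (hx : x * x = 1) :
    y ∈ Subgroup.zpowers x ↔ y = 1 ∨ y = x := by
  constructor
  · rintro ⟨k, rfl⟩
    have hx2 : x ^ (2 : ℤ) = 1 := by
      rw [show (2 : ℤ) = 1 + 1 from rfl, zpow_add, zpow_one]; exact hx
    rcases Int.even_or_odd k with ⟨m, rfl⟩ | ⟨m, rfl⟩
    · left
      show x ^ (m + m) = 1
      rw [show m + m = 2 * m by ring, zpow_mul, hx2, one_zpow]
    · right
      show x ^ (2 * m + 1) = x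
      rw [zpow_add, zpow_one, zpow_mul, hx2, one_zpow, one_mul]
  · rintro (rfl | rfl)
    · exact one_mem _
    · exact Subgroup.mem_zpowers _

/-- Remark 7.6: in the Weyl group of type `B₂` (the dihedral group of order 8, with
simple reflections `s = sr 0` and `t = sr 1`), the assignment sending the standard
parabolic subgroups `⊥, ⟨s⟩, ⟨t⟩, ⊤` to `⊥, ⟨s⟩, ⟨(st)²⟩, ⊤` preserves cardinalities
and the relation "conjugate to a subgroup of", yet `⟨(st)²⟩` is not conjugate
to `⟨t⟩`. -/
theorem dihedral_B2_counterexample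
    (s t : DihedralGroup 4) (hs : s = DihedralGroup.sr 0) (ht : t = DihedralGroup.sr 1)
    (parab : List (Subgroup (DihedralGroup 4) × Subgroup (DihedralGroup 4)))
    (hparab : parab = [(⊥, ⊥), (Subgroup.zpowers s, Subgroup.zpowers s),
      (Subgroup.zpowers t, Subgroup.zpowers ((s * t) ^ 2)), (⊤, ⊤)]) :
    -- `s` and `t` are simple reflections generating the group, with `st` of order 4
    orderOf s = 2 ∧ orderOf t = 2 ∧ orderOf (s * t) = 4 ∧
      Subgroup.closure {s, t} = ⊤ ∧
    -- (i) the assignment preserves cardinalities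
    (∀ pr ∈ parab, Nat.card pr.2 = Nat.card pr.1) ∧
    -- (ii) it preserves the relation "conjugate to a subgroup of"
    (∀ pr₁ ∈ parab, ∀ pr₂ ∈ parab,
      (∃ g : DihedralGroup 4, pr₁.1.map (MulAut.conj g).toMonoidHom ≤ pr₂.1) →
      ∃ g : DihedralGroup 4, pr₁.2.map (MulAut.conj g).toMonoidHom ≤ pr₂.2) ∧
    -- (iii) yet `⟨(st)²⟩` is not conjugate to `⟨t⟩`
    ¬ ∃ g : DihedralGroup 4,
        (Subgroup.zpowers ((s * t) ^ 2)).map (MulAut.conj g).toMonoidHom =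
          Subgroup.zpowers t := by
  subst hs ht hparab
  have hst : DihedralGroup.sr 0 * DihedralGroup.sr 1 = (DihedralGroup.r 1 : DihedralGroup 4) := by decide
  have hst2 : (DihedralGroup.sr 0 * DihedralGroup.sr 1) ^ 2 = (DihedralGroup.r 2 : DihedralGroup 4) := by decide
  -- central element
  have hcentral : ∀ g : DihedralGroup 4, g * DihedralGroup.r 2 * g⁻¹ = (DihedralGroup.r 2 : DihedralGroup 4) := by
    decide
  have hr2sq : DihedralGroup.r 2 * DihedralGroup.r 2 = (1 : DihedralGroup 4) := by decide
  have hssq : DihedralGroup.sr 0 * DihedralGroup.sr 0 = (1 : DihedralGroup 4) := by decide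
  have htsq : DihedralGroup.sr 1 * DihedralGroup.sr 1 = (1 : DihedralGroup 4) := by decide
  refine ⟨orderOf_sr 0, orderOf_sr 1, ?_, ?_, ?_, ?_, ?_⟩
  · rw [hst]; exact orderOf_r_one
  · -- closure {s, t} = ⊤
    rw [eq_top_iff]
    rintro (j | j) -
    · have : DihedralGroup.r 1 ∈ Subgroup.closure
          ({DihedralGroup.sr 0, DihedralGroup.sr 1} : Set (DihedralGroup 4)) := by
        rw [← hst]
        exact mul_mem (Subgroup.subset_closure (Or.inl rfl))
          (Subgroup.subset_closure (Or.inr rfl))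
      have h2 : DihedralGroup.r j = DihedralGroup.r 1 ^ j.val := by
        rw [DihedralGroup.r_one_pow, ZMod.natCast_val, ZMod.cast_id]
      rw [h2]
      exact pow_mem this _
    · have h1 : DihedralGroup.r 1 ∈ Subgroup.closure
          ({DihedralGroup.sr 0, DihedralGroup.sr 1} : Set (DihedralGroup 4)) := by
        rw [← hst]
        exact mul_mem (Subgroup.subset_closure (Or.inl rfl))
          (Subgroup.subset_closure (Or.inr rfl))
      have h2 : DihedralGroup.sr j = DihedralGroup.sr 0 * DihedralGroup.r 1 ^ j.val := by
        rw [DihedralGroup.r_one_pow, DihedralGroup.sr_mul_r, zero_add,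
          ZMod.natCast_val, ZMod.cast_id]
      rw [h2]
      exact mul_mem (Subgroup.subset_closure (Or.inl rfl)) (pow_mem h1 _)
  · -- cardinalities
    intro pr hpr
    simp only [List.mem_cons, List.not_mem_nil, or_false] at hpr
    rcases hpr with rfl | rfl | rfl | rfl
    · rfl
    · rfl
    · simp only [hst2, Nat.card_zpowers]
      rw [orderOf_sr, orderOf_eq_prime (p := 2) (by decide) (by decide)]
    · rfl
  · -- conjugation-preserving
    intro pr₁ h₁ pr₂ h₂
    simp only [List.mem_cons, List.not_mem_nil, or_false] at h₁ h₂
    have key : ∀ (g : DihedralGroup 4) (H : Subgroup (DihedralGroup 4)),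
        H.map (MulAut.conj g).toMonoidHom ≤ H ∨ True := fun _ _ => Or.inr trivial
    rcases h₁ with rfl | rfl | rfl | rfl <;> rcases h₂ with rfl | rfl | rfl | rfl <;>
        simp only []
    -- ⊥ to anything
    · exact fun _ => ⟨1, by simp⟩
    · exact fun _ => ⟨1, by simp⟩
    · exact fun _ => ⟨1, by simp⟩
    · exact fun _ => ⟨1, by simp⟩
    -- S
    · rintro ⟨g, hg⟩
      exfalso
      have : g * DihedralGroup.sr 0 * g⁻¹ ∈ (⊥ : Subgroup (DihedralGroup 4)) :=
        hg ⟨DihedralGroup.sr 0, Subgroup.mem_zpowers _, rfl⟩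
      rw [Subgroup.mem_bot] at this
      clear hg
      revert this
      revert g
      decide
    · exact fun _ => ⟨1, by simp⟩
    · rintro ⟨g, hg⟩
      exfalso
      have : g * DihedralGroup.sr 0 * g⁻¹ ∈ Subgroup.zpowers (DihedralGroup.sr 1) :=
        hg ⟨DihedralGroup.sr 0, Subgroup.mem_zpowers _, rfl⟩
      rw [mem_zpowers_two htsq] at this
      clear hg
      revert this
      revert g
      decide
    · exact fun _ => ⟨1, by simp⟩
    -- T
    · rintro ⟨g, hg⟩
      exfalso
      have : g * DihedralGroup.sr 1 * g⁻¹ ∈ (⊥ : Subgroup (DihedralGroup 4)) :=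
        hg ⟨DihedralGroup.sr 1, Subgroup.mem_zpowers _, rfl⟩
      rw [Subgroup.mem_bot] at this
      clear hg
      revert this
      revert g
      decide
    · rintro ⟨g, hg⟩
      exfalso
      have : g * DihedralGroup.sr 1 * g⁻¹ ∈ Subgroup.zpowers (DihedralGroup.sr 0) :=
        hg ⟨DihedralGroup.sr 1, Subgroup.mem_zpowers _, rfl⟩
      rw [mem_zpowers_two hssq] at this
      clear hg
      revert this
      revert g
      decide
    · exact fun _ => ⟨1, by simp⟩
    · exact fun _ => ⟨1, by simp⟩
    -- ⊤
    · rintro ⟨g, hg⟩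
      exfalso
      have : g * (g⁻¹ * DihedralGroup.r 1 * g) * g⁻¹ ∈ (⊥ : Subgroup (DihedralGroup 4)) :=
        hg ⟨g⁻¹ * DihedralGroup.r 1 * g, Subgroup.mem_top _, rfl⟩
      rw [Subgroup.mem_bot] at this
      clear hg
      revert this
      revert g
      decide
    · rintro ⟨g, hg⟩
      exfalso
      have : g * (g⁻¹ * DihedralGroup.r 1 * g) * g⁻¹ ∈
          Subgroup.zpowers (DihedralGroup.sr 0) :=
        hg ⟨g⁻¹ * DihedralGroup.r 1 * g, Subgroup.mem_top _, rfl⟩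
      rw [mem_zpowers_two hssq] at this
      clear hg
      revert this
      revert g
      decide
    · rintro ⟨g, hg⟩
      exfalso
      have : g * (g⁻¹ * DihedralGroup.r 1 * g) * g⁻¹ ∈
          Subgroup.zpowers (DihedralGroup.sr 1) :=
        hg ⟨g⁻¹ * DihedralGroup.r 1 * g, Subgroup.mem_top _, rfl⟩
      rw [mem_zpowers_two htsq] at this
      clear hg
      revert this
      revert g
      decide
    · exact fun _ => ⟨1, by simp⟩
  · -- (iii)
    rintro ⟨g, hg⟩
    rw [hst2, MonoidHom.map_zpowers] at hg
    have : (MulAut.conj g).toMonoidHom (DihedralGroup.r 2) = DihedralGroup.r 2 := by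
      simpa using hcentral g
    rw [this] at hg
    have ht : (DihedralGroup.sr 1 : DihedralGroup 4) ∈ Subgroup.zpowers (DihedralGroup.r 2) := by
      rw [hg]; exact Subgroup.mem_zpowers _
    rw [mem_zpowers_two hr2sq] at ht
    revert ht
    decide
end
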